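/- Let f, g : 𝕋 → ℂ be continuous functions on the circle 𝕋 = AddCircle (2π), let n ≥ 1, and let α ∈ ℂ satisfy α^n = 1. Then (∑_{k=0}^{n−1} α^k S_{2πk/n} f) ⋆ (∑_{l=0}^{n−1} α^l S_{2πl/n} g) = n · ∑_{j=0}^{n−1} α^j S_{2πj/n} (f ⋆ g), where S_{2πk/n} denotes the shift by the image of the real number 2πk/n in 𝕋. -/

import Mathlib

open MeasureTheory Real Set Pointwise

noncomputable section

abbrev 𝕋 : Type := AddCircle (2 * π)

instance : Fact (0 < 2 * π) := ⟨by positivity⟩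

/-- Natural projection `ℝ → 𝕋`. -/
def proj : ℝ → 𝕋 := fun r => (r : 𝕋)

/-- Convolution of functions on the circle with respect to Haar (Lebesgue) measure. -/
def circConv (f g : 𝕋 → ℂ) : 𝕋 → ℂ := fun x => ∫ t : 𝕋, f t * g (x - t)

/-- Shift operator `(S_y f)(x) = f (x - y)`. -/
def shift (y : 𝕋) (f : 𝕋 → ℂ) : 𝕋 → ℂ := fun x => f (x - y)


/-!
Convolution is bilinear and intertwines shifts, `S_a f ⋆ S_b g = S_{a+b} (f ⋆ g)`. Since
`α ^ n = 1` and `2π = 0` in `𝕋`, both `k ↦ α ^ k` and `k ↦ 2πk/n` are additive on `Fin n`, so the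
`(k, l)` term of the expanded convolution depends only on `j = k + l` in `Fin n`, and every `j`
arises from exactly `n` pairs.
-/

lemma pow_val_add_of_pow_eq_one {M : Type*} [Monoid M] {α : M} {n : ℕ} (hα : α ^ n = 1)
    (k l : Fin n) : α ^ ((k + l : Fin n) : ℕ) = α ^ (k : ℕ) * α ^ (l : ℕ) := by
  rw [Fin.val_add, ← pow_eq_pow_mod _ hα, pow_add]

lemma AddCircle.coe_mul_val_add_div (p : ℝ) {n : ℕ} (k l : Fin n) :
    ((p * (k + l : Fin n) / n : ℝ) : AddCircle p) = (p * k / n : ℝ) + (p * l / n : ℝ) := by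
  have hn : (n : ℝ) ≠ 0 := by exact_mod_cast k.pos.ne'
  have hsplit : p * k / n + p * l / n = p * (k + l : Fin n) / n + ((k + l : ℕ) / n) • p := by
    rw [Fin.val_add, nsmul_eq_mul]
    field_simp
    have := congrArg (fun m : ℕ => (m : ℝ)) (Nat.mod_add_div (k + l) n)
    push_cast at this
    linear_combination -p * this
  rw [← AddCircle.coe_add, hsplit, AddCircle.coe_add, AddCircle.coe_nsmul, AddCircle.coe_period,
    smul_zero, add_zero]

lemma sum_sum_add_eq_card_nsmul {G M : Type*} [AddGroup G] [Fintype G] [AddCommMonoid M]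
    (F : G → M) : ∑ k, ∑ l, F (k + l) = Fintype.card G • ∑ j, F j := by
  calc ∑ k, ∑ l, F (k + l) = ∑ _k : G, ∑ j, F j :=
        Finset.sum_congr rfl fun k _ => Equiv.sum_comp (Equiv.addLeft k) F
    _ = Fintype.card G • ∑ j, F j := by rw [Finset.sum_const, Finset.card_univ]

lemma Continuous.shift {f : 𝕋 → ℂ} (hf : Continuous f) (y : 𝕋) : Continuous (shift y f) :=
  hf.comp (continuous_sub_right y)

lemma circConv_shift_shift (a b : 𝕋) (f g : 𝕋 → ℂ) :
    circConv (shift a f) (shift b g) = shift (a + b) (circConv f g) := by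
  funext x
  rw [circConv, ← integral_add_right_eq_self _ a]
  simp only [shift, circConv, add_sub_cancel_right]
  congr 1
  funext t
  congr 2
  abel

lemma circConv_sum_mul_sum {ι κ : Type*} (s : Finset ι) (t : Finset κ) (c : ι → ℂ) (d : κ → ℂ)
    {F : ι → 𝕋 → ℂ} {G : κ → 𝕋 → ℂ} (hF : ∀ k ∈ s, Continuous (F k))
    (hG : ∀ l ∈ t, Continuous (G l)) :
    circConv (fun x => ∑ k ∈ s, c k * F k x) (fun x => ∑ l ∈ t, d l * G l x) =
      fun x => ∑ k ∈ s, ∑ l ∈ t, c k * d l * circConv (F k) (G l) x := by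
  funext x
  have hint : ∀ k ∈ s, ∀ l ∈ t, Integrable fun u => c k * d l * (F k u * G l (x - u)) :=
    fun k hk l hl => (((hF k hk).mul ((hG l hl).comp (continuous_sub_left x)))
      |>.integrable_of_hasCompactSupport (HasCompactSupport.of_compactSpace _)).const_mul _
  have hexpand : ∀ u, (∑ k ∈ s, c k * F k u) * (∑ l ∈ t, d l * G l (x - u)) =
      ∑ k ∈ s, ∑ l ∈ t, c k * d l * (F k u * G l (x - u)) := fun u => by
    rw [Finset.sum_mul_sum]
    exact Finset.sum_congr rfl fun k _ => Finset.sum_congr rfl fun l _ => by ring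
  simp only [circConv, hexpand]
  rw [integral_finsetSum _ fun k hk => integrable_finsetSum _ (hint k hk)]
  refine Finset.sum_congr rfl fun k hk => ?_
  rw [integral_finsetSum _ (hint k hk)]
  exact Finset.sum_congr rfl fun l _ => integral_const_mul _ _

theorem conv_of_root_of_unity_combinations (n : ℕ) (hn : 1 ≤ n)
    (f g : 𝕋 → ℂ) (hf : Continuous f) (hg : Continuous g)
    (α : ℂ) (hα : α ^ n = 1) :
    circConv (fun x => ∑ k : Fin n, α ^ (k : ℕ) * shift (proj (2 * π * k / n)) f x)
             (fun x => ∑ l : Fin n, α ^ (l : ℕ) * shift (proj (2 * π * l / n)) g x)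
    = fun x => (n : ℂ) *
        ∑ j : Fin n, α ^ (j : ℕ) * shift (proj (2 * π * j / n)) (circConv f g) x := by
  have : NeZero n := ⟨by omega⟩
  rw [circConv_sum_mul_sum _ _ _ _ (fun k _ => hf.shift _) fun l _ => hg.shift _]
  funext x
  simp only [circConv_shift_shift, proj, ← AddCircle.coe_mul_val_add_div,
    ← pow_val_add_of_pow_eq_one hα]
  rw [sum_sum_add_eq_card_nsmul (fun j : Fin n => α ^ (j : ℕ) *
    shift ((2 * π * j / n : ℝ) : 𝕋) (circConv f g) x), Fintype.card_fin, nsmul_eq_mul]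

end
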